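/- arXiv:1809.02388 — 7 statements merged into one kernel-verified Lean document; each statement's English description precedes it below -/
import Mathlib

section
/- The function φ: ℝ² → ℝ defined by φ(a,b) = ab if a+b ≥ 0 and φ(a,b) = -(a²+b²)/2 if a+b < 0 is an NCP-function: for all (a,b) ∈ ℝ², φ(a,b) = 0 if and only if a ≥ 0, b ≥ 0, and ab = 0. -/
noncomputable def phi (a b : ℝ) : ℝ := if a + b ≥ 0 then a * b else -(a^2 + b^2)/2

theorem phi_ncp : ∀ a b : ℝ, phi a b = 0 ↔ a ≥ 0 ∧ b ≥ 0 ∧ a * b = 0 := by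
  intro a b
  unfold phi
  split_ifs with h
  · constructor
    · intro hab
      rcases mul_eq_zero.mp hab with h0 | h0 <;> subst h0 <;>
        simp_all <;> constructor <;> linarith
    · tauto
  · constructor
    · intro h0
      have ha : a = 0 ∧ b = 0 := by
        constructor <;> nlinarith [sq_nonneg a, sq_nonneg b]
      exfalso; linarith [ha.1, ha.2]
    · rintro ⟨ha, hb, -⟩; linarith
end

section
/- Let X(t) ⊂ ℝ² be the set of (a,b) satisfying φ(a-t,b-t) ≤ 0, φ(-a-t,b-t) ≤ 0, φ(-a-t,-b-t) ≤ 0, and φ(a-t,-b-t) ≤ 0, where φ(a,b) = ab if a+b ≥ 0 and -(a²+b²)/2 otherwise. Then for all 0 ≤ t₁ ≤ t₂, X(t₁) ⊆ X(t₂) (monotonicity of the relaxation). -/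
def Xrel (t : ℝ) : Set (ℝ × ℝ) :=
  {p | phi (p.1 - t) (p.2 - t) ≤ 0 ∧ phi (-p.1 - t) (p.2 - t) ≤ 0 ∧
       phi (-p.1 - t) (-p.2 - t) ≤ 0 ∧ phi (p.1 - t) (-p.2 - t) ≤ 0}

lemma phi_nonpos_iff (x y : ℝ) : phi x y ≤ 0 ↔ x ≤ 0 ∨ y ≤ 0 := by
  unfold phi
  split_ifs with h
  · constructor
    · intro hxy
      by_contra hc
      push_neg at hc
      nlinarith [hc.1, hc.2]
    · rintro (hx | hy)
      · nlinarith
      · nlinarith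
  · constructor
    · intro _
      push_neg at h
      by_contra hc
      push_neg at hc
      linarith [hc.1, hc.2]
    · intro _
      nlinarith [sq_nonneg x, sq_nonneg y]

theorem Xrel_mono : ∀ t₁ t₂ : ℝ, 0 ≤ t₁ → t₁ ≤ t₂ → Xrel t₁ ⊆ Xrel t₂ := by
  intro t₁ t₂ _ h12 p hp
  obtain ⟨h1, h2, h3, h4⟩ := hp
  rw [phi_nonpos_iff] at h1 h2 h3 h4
  show _ ∧ _ ∧ _ ∧ _
  refine ⟨?_, ?_, ?_, ?_⟩ <;> rw [phi_nonpos_iff] <;>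
    [rcases h1 with h | h; rcases h2 with h | h; rcases h3 with h | h; rcases h4 with h | h] <;>
    [left; right; left; right; left; right; left; right] <;> linarith
end

section
/- Let X(t) ⊂ ℝ² be as defined via the four φ-inequality constraints with parameter t. Then ⋂_{t > 0} X(t) = {(a,b) ∈ ℝ² : ab = 0}. -/
lemma phi_nonpos_iff_s5 (a b : ℝ) : phi a b ≤ 0 ↔ (a + b ≥ 0 → a * b ≤ 0) := by
  by_cases h : a + b ≥ 0
  · simp [phi, h]
  · simp only [phi, if_neg h]
    constructor
    · intro _ hge; exact absurd hge h
    · intro _; nlinarith [sq_nonneg a, sq_nonneg b]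

theorem Xrel_iInter : ⋂ (t : ℝ) (_ : t > 0), Xrel t = {p : ℝ × ℝ | p.1 * p.2 = 0} := by
  ext ⟨a, b⟩
  simp only [Set.mem_iInter, Set.mem_setOf_eq, Xrel, phi_nonpos_iff_s5]
  constructor
  · intro h
    by_contra hab
    rcases lt_trichotomy a 0 with ha | ha | ha
    · rcases lt_trichotomy b 0 with hb | hb | hb
      · -- a<0, b<0: constraint 3
        set t := min (-a) (-b) / 2 with ht
        have htpos : 0 < t := by
          have := lt_min (by linarith : (0:ℝ) < -a) (by linarith : (0:ℝ) < -b)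
          rw [ht]; linarith
        have h1 : 2 * t ≤ -a := by rw [ht]; have := min_le_left (-a) (-b); linarith
        have h2 : 2 * t ≤ -b := by rw [ht]; have := min_le_right (-a) (-b); linarith
        obtain ⟨_, _, h3, _⟩ := h t htpos
        have := h3 (by linarith)
        nlinarith
      · exact hab (by rw [hb, mul_zero])
      · -- a<0, b>0: constraint 2
        set t := min (-a) b / 2 with ht
        have htpos : 0 < t := by
          have := lt_min (by linarith : (0:ℝ) < -a) hb
          rw [ht]; linarith
        have h1 : 2 * t ≤ -a := by rw [ht]; have := min_le_left (-a) b; linarith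
        have h2 : 2 * t ≤ b := by rw [ht]; have := min_le_right (-a) b; linarith
        obtain ⟨_, h3, _, _⟩ := h t htpos
        have := h3 (by linarith)
        nlinarith
    · exact hab (by rw [ha, zero_mul])
    · rcases lt_trichotomy b 0 with hb | hb | hb
      · -- a>0, b<0: constraint 4
        set t := min a (-b) / 2 with ht
        have htpos : 0 < t := by
          have := lt_min ha (by linarith : (0:ℝ) < -b)
          rw [ht]; linarith
        have h1 : 2 * t ≤ a := by rw [ht]; have := min_le_left a (-b); linarith
        have h2 : 2 * t ≤ -b := by rw [ht]; have := min_le_right a (-b); linarith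
        obtain ⟨_, _, _, h3⟩ := h t htpos
        have := h3 (by linarith)
        nlinarith
      · exact hab (by rw [hb, mul_zero])
      · -- a>0, b>0: constraint 1
        set t := min a b / 2 with ht
        have htpos : 0 < t := by
          have := lt_min ha hb
          rw [ht]; linarith
        have h1 : 2 * t ≤ a := by rw [ht]; have := min_le_left a b; linarith
        have h2 : 2 * t ≤ b := by rw [ht]; have := min_le_right a b; linarith
        obtain ⟨h3, _, _, _⟩ := h t htpos
        have := h3 (by linarith)
        nlinarith
  · intro hab t ht
    rcases mul_eq_zero.mp hab with h0 | h0 <;> subst h0 <;>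
      refine ⟨fun hs => ?_, fun hs => ?_, fun hs => ?_, fun hs => ?_⟩ <;> nlinarith
end

section
/- Let {v¹,…,vʳ} ∪ {w¹,…,wˢ} ⊂ ℝⁿ be positive-linearly independent, i.e., the only solution of 0 = Σᵢ αᵢvⁱ + Σⱼ βⱼwʲ with α ≥ 0 is α = 0, β = 0. Then there exists ε > 0 such that for all perturbations ṽⁱ, w̃ʲ with Euclidean norm at most ε, the union {v¹+ṽ¹,…,vʳ+ṽʳ} ∪ {w¹+w̃¹,…,wˢ+w̃ˢ} is also positive-linearly independent. -/
open Finset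

/-- Positive-linear independence of the union of two finite families of vectors in ℝⁿ. -/
def PosLinIndep {n r s : ℕ} (v : Fin r → EuclideanSpace ℝ (Fin n))
    (w : Fin s → EuclideanSpace ℝ (Fin n)) : Prop :=
  ∀ (α : Fin r → ℝ) (β : Fin s → ℝ), (∀ i, 0 ≤ α i) →
    (∑ i, α i • v i) + (∑ j, β j • w j) = 0 → α = 0 ∧ β = 0

/-!
Positive-linear independence says that the linear map `T (α, β) = ∑ αᵢ vᵢ + ∑ βⱼ wⱼ` has no
nonzero zero on the closed cone `α ≥ 0`. By compactness of the unit sphere, `‖T p‖ ≥ m ‖p‖` on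
that cone for some `m > 0`, while perturbing the vectors by at most `ε` changes `T p` by at most
`(r + s) ε ‖p‖`; for `ε < m / (r + s)` the perturbed map still has no nonzero zero on the cone.
-/

section ConeBound

variable {X E : Type*} [NormedAddCommGroup X] [NormedSpace ℝ X] [FiniteDimensional ℝ X]
  [NormedAddCommGroup E] [NormedSpace ℝ E]

theorem LinearMap.exists_pos_mul_norm_le_norm_on_cone (f : X →ₗ[ℝ] E) {C : Set X}
    (hC : IsClosed C) (hsmul : ∀ x ∈ C, ∀ c : ℝ, 0 < c → c • x ∈ C)
    (hf : ∀ x ∈ C, f x = 0 → x = 0) :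
    ∃ m > (0 : ℝ), ∀ x ∈ C, m * ‖x‖ ≤ ‖f x‖ := by
  have hK : IsCompact (C ∩ Metric.sphere 0 1) := (isCompact_sphere 0 1).inter_left hC
  have hpos : ∀ u ∈ C ∩ Metric.sphere 0 1, 0 < ‖f u‖ := by
    rintro u ⟨huC, hu⟩
    refine norm_pos_iff.2 fun hfu => ?_
    simp [hf u huC hfu] at hu
  obtain ⟨m, hm, hmin⟩ :=
    hK.exists_forall_le' f.continuous_of_finiteDimensional.norm.continuousOn hpos
  refine ⟨m, hm, fun x hx => ?_⟩
  rcases eq_or_ne x 0 with rfl | hx0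
  · simp
  have hnx : 0 < ‖x‖ := norm_pos_iff.2 hx0
  have hu : ‖x‖⁻¹ • x ∈ C ∩ Metric.sphere 0 1 :=
    ⟨hsmul x hx _ (inv_pos.2 hnx), by simp [norm_smul, hnx.ne']⟩
  have := hmin _ hu
  rw [map_smul, norm_smul, norm_inv, norm_norm, le_inv_mul_iff₀ hnx, mul_comm] at this
  exact this

end ConeBound

theorem eq_zero_of_mul_norm_le_of_add_eq_zero {X E : Type*} [NormedAddCommGroup X]
    [NormedAddCommGroup E] {x : X} {a b : E} {m δ : ℝ} (hδ : δ < m) (ha : m * ‖x‖ ≤ ‖a‖)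
    (hb : ‖b‖ ≤ δ * ‖x‖) (hab : a + b = 0) : x = 0 := by
  rw [add_eq_zero_iff_eq_neg] at hab
  rw [hab, norm_neg] at ha
  exact norm_eq_zero.1 <| le_antisymm (by nlinarith [norm_nonneg x]) (norm_nonneg x)

section PairLinearCombination

variable {ι κ E : Type*} [Fintype ι] [Fintype κ] [NormedAddCommGroup E] [NormedSpace ℝ E]

theorem norm_fintype_linearCombination_le {v : ι → E} {ε : ℝ} (hv : ∀ i, ‖v i‖ ≤ ε)
    (a : ι → ℝ) : ‖Fintype.linearCombination ℝ v a‖ ≤ Fintype.card ι * ε * ‖a‖ := by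
  calc ‖Fintype.linearCombination ℝ v a‖ ≤ ∑ i, ‖a i • v i‖ := norm_sum_le _ _
    _ ≤ ∑ _i : ι, ‖a‖ * ε := by
        gcongr with i
        rw [norm_smul]
        exact mul_le_mul (norm_le_pi_norm a i) (hv i) (norm_nonneg _) (norm_nonneg _)
    _ = Fintype.card ι * ε * ‖a‖ := by
        rw [sum_const, card_univ, nsmul_eq_mul]
        ring

def pairLinearCombination (v : ι → E) (w : κ → E) : (ι → ℝ) × (κ → ℝ) →ₗ[ℝ] E :=
  (Fintype.linearCombination ℝ v).coprod (Fintype.linearCombination ℝ w)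

theorem pairLinearCombination_apply (v : ι → E) (w : κ → E) (p : (ι → ℝ) × (κ → ℝ)) :
    pairLinearCombination v w p = ∑ i, p.1 i • v i + ∑ j, p.2 j • w j :=
  rfl

theorem pairLinearCombination_add (v v' : ι → E) (w w' : κ → E) (p : (ι → ℝ) × (κ → ℝ)) :
    pairLinearCombination (v + v') (w + w') p =
      pairLinearCombination v w p + pairLinearCombination v' w' p := by
  simp only [pairLinearCombination_apply, Pi.add_apply, smul_add, sum_add_distrib]
  abel

theorem norm_pairLinearCombination_le {v : ι → E} {w : κ → E} {ε : ℝ} (hε : 0 ≤ ε)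
    (hv : ∀ i, ‖v i‖ ≤ ε) (hw : ∀ j, ‖w j‖ ≤ ε) (p : (ι → ℝ) × (κ → ℝ)) :
    ‖pairLinearCombination v w p‖ ≤ (Fintype.card ι + Fintype.card κ) * ε * ‖p‖ := by
  calc ‖pairLinearCombination v w p‖
      ≤ ‖Fintype.linearCombination ℝ v p.1‖ + ‖Fintype.linearCombination ℝ w p.2‖ :=
        norm_add_le _ _
    _ ≤ Fintype.card ι * ε * ‖p.1‖ + Fintype.card κ * ε * ‖p.2‖ :=
        add_le_add (norm_fintype_linearCombination_le hv _)
          (norm_fintype_linearCombination_le hw _)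
    _ ≤ (Fintype.card ι + Fintype.card κ) * ε * ‖p‖ := by
        have := norm_fst_le p
        have := norm_snd_le p
        rw [add_mul, add_mul]
        gcongr

end PairLinearCombination

theorem posLinIndep_iff {n r s : ℕ} (v : Fin r → EuclideanSpace ℝ (Fin n))
    (w : Fin s → EuclideanSpace ℝ (Fin n)) :
    PosLinIndep v w ↔ ∀ p, 0 ≤ p.1 → pairLinearCombination v w p = 0 → p = 0 := by
  simp only [PosLinIndep, Prod.forall, Prod.mk_eq_zero, Pi.le_def, Pi.zero_apply,
    pairLinearCombination_apply]

theorem posLinIndep_stable {n r s : ℕ} (v : Fin r → EuclideanSpace ℝ (Fin n))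
    (w : Fin s → EuclideanSpace ℝ (Fin n)) (h : PosLinIndep v w) :
    ∃ ε > (0 : ℝ), ∀ (vp : Fin r → EuclideanSpace ℝ (Fin n))
      (wp : Fin s → EuclideanSpace ℝ (Fin n)),
      (∀ i, ‖vp i‖ ≤ ε) → (∀ j, ‖wp j‖ ≤ ε) →
      PosLinIndep (fun i => v i + vp i) (fun j => w j + wp j) := by
  obtain ⟨m, hm, hbelow⟩ := (pairLinearCombination v w).exists_pos_mul_norm_le_norm_on_cone
    (isClosed_Ici.preimage continuous_fst) (fun p hp c hc => smul_nonneg hc.le hp)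
    ((posLinIndep_iff v w).1 h)
  have hε : 0 < m / (r + s + 1) := by positivity
  refine ⟨_, hε, fun vp wp hvp hwp => (posLinIndep_iff _ _).2 fun p hp hzero => ?_⟩
  have hsmall := norm_pairLinearCombination_le hε.le hvp hwp p
  simp only [Fintype.card_fin] at hsmall
  have hδ : (r + s : ℝ) * (m / (r + s + 1)) < m := by
    rw [mul_div_assoc', div_lt_iff₀ (by positivity)]
    nlinarith
  exact eq_zero_of_mul_norm_le_of_add_eq_zero hδ (hbelow p hp) hsmall
    (by rwa [← pairLinearCombination_add])
end

section
/- Let C ∈ ℝ^{m×n} and D ∈ ℝ^{p×n}, and let K := {d ∈ ℝⁿ : Cd ≤ 0, Dd = 0}. Then the polar cone K° := {y ∈ ℝⁿ : x·y ≤ 0 for all x ∈ K} equals {Cᵀλ + Dᵀρ : λ ∈ ℝᵐ, λ ≥ 0, ρ ∈ ℝᵖ}. -/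
/-!
The inclusion `⊇` is a direct computation. For `⊆`, `K°` is compared with the cone `Q` generated
by the rows of `C`, the rows of `D` and their negatives. By the conic Carathéodory theorem `Q` is
a finite union of images of closed orthants under injective linear maps, hence closed, so a point
`y ∉ Q` is strictly separated from `Q` by some `z` with `0 ≤ q ⬝ᵥ z` on `Q` and `y ⬝ᵥ z < 0`.
Then `-z ∈ K` and `(-z) ⬝ᵥ y > 0`, so `y ∉ K°`.
-/

open Finset Matrix

section Caratheodory

variable {R M ι : Type*} [Field R] [LinearOrder R] [IsStrictOrderedRing R]
  [AddCommGroup M] [Module R M] {v : ι → M}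

theorem exists_nonneg_sum_erase_eq_of_not_linearIndepOn [DecidableEq ι] {s : Finset ι}
    {c : ι → R} (hv : ¬LinearIndepOn R v s) (hc : ∀ i ∈ s, 0 ≤ c i) :
    ∃ j ∈ s, ∃ c' : ι → R, (∀ i ∈ s, 0 ≤ c' i) ∧
      ∑ i ∈ s.erase j, c' i • v i = ∑ i ∈ s, c i • v i := by
  obtain ⟨g, hg, k, hk, hgk⟩ : ∃ g : ι → R, ∑ i ∈ s, g i • v i = 0 ∧ ∃ k ∈ s, 0 < g k := by
    obtain ⟨g, hg, k, hk, hgk⟩ := not_linearIndepOn_finset_iff.mp hv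
    rcases hgk.lt_or_gt with hneg | hpos
    · exact ⟨-g, by simp [neg_smul, hg], k, hk, by simpa using hneg⟩
    · exact ⟨g, hg, k, hk, hpos⟩
  -- Walk from `c` along the relation `g` until a first coefficient vanishes.
  obtain ⟨j, hj, hmin⟩ := exists_min_image {i ∈ s | 0 < g i} (fun i => c i / g i)
    ⟨k, mem_filter.mpr ⟨hk, hgk⟩⟩
  rw [mem_filter] at hj
  set t := c j / g j
  have ht : 0 ≤ t := div_nonneg (hc j hj.1) hj.2.le
  refine ⟨j, hj.1, fun i => c i - t * g i, fun i hi => ?_, ?_⟩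
  · rcases le_or_gt (g i) 0 with hgi | hgi
    · nlinarith [hc i hi]
    · have := hmin i (mem_filter.mpr ⟨hi, hgi⟩)
      rw [le_div_iff₀ hgi] at this
      linarith
  · have hcj : c j - t * g j = 0 := by simp [t, hj.2.ne']
    rw [sum_erase _ (by simp only [hcj, zero_smul])]
    simp only [sub_smul, mul_smul, sum_sub_distrib, ← smul_sum, hg, smul_zero, sub_zero]

theorem exists_linearIndepOn_nonneg_sum_eq (s : Finset ι) {c : ι → R}
    (hc : ∀ i ∈ s, 0 ≤ c i) :
    ∃ t ⊆ s, LinearIndepOn R v t ∧ ∃ c' : ι → R, (∀ i ∈ t, 0 ≤ c' i) ∧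
      ∑ i ∈ t, c' i • v i = ∑ i ∈ s, c i • v i := by
  classical
  induction s using Finset.strongInduction generalizing c with
  | H s ih =>
  by_cases hv : LinearIndepOn R v s
  · exact ⟨s, subset_rfl, hv, c, hc, rfl⟩
  obtain ⟨j, hj, c', hc', hsum⟩ := exists_nonneg_sum_erase_eq_of_not_linearIndepOn hv hc
  obtain ⟨t, hts, ht, c'', hc'', hsum'⟩ :=
    ih _ (erase_ssubset hj) fun i hi => hc' i (mem_of_mem_erase hi)
  exact ⟨t, hts.trans (erase_subset _ _), ht, c'', hc'', hsum'.trans hsum⟩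

end Caratheodory

namespace PointedCone

section Algebraic

variable {R M ι : Type*} [Fintype ι]

theorem mem_hull_range_iff [Semiring R] [PartialOrder R] [IsOrderedRing R] [AddCommMonoid M]
    [Module R M] {v : ι → M} {x : M} :
    x ∈ hull R (Set.range v) ↔ ∃ c : ι → R, 0 ≤ c ∧ ∑ i, c i • v i = x := by
  rw [Submodule.mem_span_range_iff_exists_fun]
  constructor
  · rintro ⟨c, rfl⟩
    exact ⟨fun i => c i, fun i => (c i).2, rfl⟩
  · rintro ⟨c, hc, rfl⟩
    exact ⟨fun i => ⟨c i, hc i⟩, rfl⟩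

theorem coe_hull_range_eq_image [Semiring R] [PartialOrder R] [IsOrderedRing R]
    [AddCommMonoid M] [Module R M] (v : ι → M) :
    (hull R (Set.range v) : Set M) = Fintype.linearCombination R v '' Set.Ici 0 := by
  ext x
  simp [mem_hull_range_iff, Fintype.linearCombination_apply]

theorem coe_hull_range_eq_biUnion_linearIndepOn [Field R] [LinearOrder R]
    [IsStrictOrderedRing R] [AddCommGroup M] [Module R M] (v : ι → M) :
    (hull R (Set.range v) : Set M) =
      ⋃ t ∈ {t : Finset ι | LinearIndepOn R v t}, hull R (Set.range fun i : t => v i) := by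
  apply subset_antisymm
  · intro x hx
    obtain ⟨c, hc, rfl⟩ := mem_hull_range_iff.mp hx
    obtain ⟨t, -, ht, c', hc', hsum⟩ := exists_linearIndepOn_nonneg_sum_eq (v := v) univ
      fun i _ => hc i
    refine Set.mem_biUnion ht (mem_hull_range_iff.mpr ⟨fun i => c' i, fun i => hc' i i.2, ?_⟩)
    rw [← hsum, ← sum_coe_sort t]
  · exact Set.iUnion₂_subset fun t _ => Submodule.span_mono (Set.range_comp_subset_range _ _)

end Algebraic

section Topological

variable {E ι : Type*} [AddCommGroup E] [Module ℝ E] [TopologicalSpace E]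
  [IsTopologicalAddGroup E] [ContinuousSMul ℝ E] [T2Space E] [Fintype ι]

theorem isClosed_hull_range_of_linearIndependent {v : ι → E} (hv : LinearIndependent ℝ v) :
    IsClosed (hull ℝ (Set.range v) : Set E) := by
  rw [coe_hull_range_eq_image]
  refine (LinearMap.isClosedEmbedding_of_injective ?_).isClosedMap _ isClosed_Ici
  exact LinearMap.ker_eq_bot.mpr (linearIndependent_iff_injective_fintypeLinearCombination.mp hv)

theorem isClosed_hull_range (v : ι → E) : IsClosed (hull ℝ (Set.range v) : Set E) := by
  rw [coe_hull_range_eq_biUnion_linearIndepOn]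
  exact (Set.toFinite _).isClosed_biUnion fun t ht => isClosed_hull_range_of_linearIndependent ht

theorem mem_hull_range_iff_forall_strongDual_nonneg [LocallyConvexSpace ℝ E] {v : ι → E}
    {y : E} : y ∈ hull ℝ (Set.range v) ↔ ∀ f : StrongDual ℝ E, (∀ i, 0 ≤ f (v i)) → 0 ≤ f y := by
  constructor
  · rintro hy f hf
    obtain ⟨c, hc, rfl⟩ := mem_hull_range_iff.mp hy
    simp only [map_sum, map_smul, smul_eq_mul]
    exact sum_nonneg fun i _ => mul_nonneg (hc i) (hf i)
  · intro h
    by_contra hy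
    obtain ⟨f, hfC, hfy⟩ :=
      ProperCone.hyperplane_separation_point ⟨hull ℝ (Set.range v), isClosed_hull_range v⟩ hy
    exact hfy.not_ge (h f fun i => hfC _ (subset_hull (Set.mem_range_self i)))

end Topological

theorem mem_hull_range_iff_forall_dotProduct_nonneg {ι n : Type*} [Fintype ι] [Fintype n]
    {v : ι → n → ℝ} {y : n → ℝ} :
    y ∈ hull ℝ (Set.range v) ↔ ∀ z : n → ℝ, (∀ i, 0 ≤ v i ⬝ᵥ z) → 0 ≤ y ⬝ᵥ z := by
  classical
  rw [mem_hull_range_iff_forall_strongDual_nonneg]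
  let e : (n → ℝ) ≃ StrongDual ℝ (n → ℝ) :=
    ((dotProductEquiv ℝ n).trans LinearMap.toContinuousLinearMap).toEquiv
  refine e.forall_congr_right.symm.trans (forall_congr' fun z => ?_)
  change ((∀ i, 0 ≤ z ⬝ᵥ v i) → 0 ≤ z ⬝ᵥ y) ↔ _
  simp only [dotProduct_comm z]

end PointedCone

section PolarGenerators

variable {m p n : Type*} (C : Matrix m n ℝ) (D : Matrix p n ℝ)

def polarGenerators : m ⊕ p ⊕ p → n → ℝ :=
  Sum.elim (fun i => C i) (Sum.elim (fun j => D j) fun j => -D j)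

theorem mem_hull_range_polarGenerators_iff [Fintype m] [Fintype p] (y : n → ℝ) :
    y ∈ PointedCone.hull ℝ (Set.range (polarGenerators C D)) ↔
      ∃ (lam : m → ℝ) (rho : p → ℝ), (∀ i, 0 ≤ lam i) ∧ y = Cᵀ *ᵥ lam + Dᵀ *ᵥ rho := by
  simp only [PointedCone.mem_hull_range_iff, polarGenerators, mulVec_transpose, vecMul_eq_sum,
    Fintype.sum_sum_type, Sum.elim_inl, Sum.elim_inr, smul_neg, sum_neg_distrib]
  constructor
  · rintro ⟨c, hc, rfl⟩
    refine ⟨fun i => c (.inl i), fun j => c (.inr (.inl j)) - c (.inr (.inr j)),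
      fun i => hc _, ?_⟩
    simp only [sub_smul, sum_sub_distrib, ← sub_eq_add_neg]
  · rintro ⟨lam, rho, hlam, rfl⟩
    refine ⟨Sum.elim lam (Sum.elim (fun j => (rho j)⁺) fun j => (rho j)⁻), fun k => ?_, ?_⟩
    · rcases k with i | j | j
      exacts [hlam i, posPart_nonneg _, negPart_nonneg _]
    · simp only [Sum.elim_inl, Sum.elim_inr, ← sub_eq_add_neg, ← sum_sub_distrib, ← sub_smul,
        posPart_sub_negPart]

theorem forall_polarGenerators_dotProduct_nonpos_iff [Fintype n] (x : n → ℝ) :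
    (∀ k, polarGenerators C D k ⬝ᵥ x ≤ 0) ↔ (∀ i, (C *ᵥ x) i ≤ 0) ∧ D *ᵥ x = 0 := by
  simp only [Sum.forall, polarGenerators, Sum.elim_inl, Sum.elim_inr, neg_dotProduct, neg_nonpos,
    funext_iff, Pi.zero_apply]
  exact and_congr Iff.rfl (forall_and.symm.trans (forall_congr' fun j => le_antisymm_iff.symm))

end PolarGenerators

theorem polar_of_polyhedral_cone {m p n : ℕ}
    (C : Matrix (Fin m) (Fin n) ℝ) (D : Matrix (Fin p) (Fin n) ℝ) :
    {y : Fin n → ℝ | ∀ x ∈ {d : Fin n → ℝ | (∀ i, C.mulVec d i ≤ 0) ∧ D.mulVec d = 0},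
        x ⬝ᵥ y ≤ 0} =
    {y : Fin n → ℝ | ∃ (lam : Fin m → ℝ) (rho : Fin p → ℝ), (∀ i, 0 ≤ lam i) ∧
        y = Cᵀ.mulVec lam + Dᵀ.mulVec rho} := by
  ext y
  simp only [Set.mem_ofPred_eq, ← forall_polarGenerators_dotProduct_nonpos_iff,
    ← mem_hull_range_polarGenerators_iff,
    PointedCone.mem_hull_range_iff_forall_dotProduct_nonneg]
  refine (Equiv.neg _).forall_congr fun x => ?_
  simp only [Equiv.neg_apply, dotProduct_neg, neg_dotProduct, neg_nonneg, dotProduct_comm y]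
end

section
/- Let u_i ≥ 0 and ℓ_i ≤ u_i for all i. For x ∈ ℝⁿ, the semi-continuity constraint 'for each i, x_i = 0 or x_i ∈ [ℓ_i, u_i]' holds if and only if there exists y ∈ ℝⁿ with y ≥ 0, x ≤ u (componentwise), and x_i(x_i − ℓ_i − y_i) = 0 for all i. -/
theorem semicontinuous_reformulation {n : ℕ} (x ℓ u : Fin n → ℝ)
    (hu : ∀ i, 0 ≤ u i) (hlu : ∀ i, ℓ i ≤ u i) :
    (∀ i, x i = 0 ∨ (ℓ i ≤ x i ∧ x i ≤ u i)) ↔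
    ∃ y : Fin n → ℝ, (∀ i, 0 ≤ y i) ∧ (∀ i, x i ≤ u i) ∧
      (∀ i, x i * (x i - ℓ i - y i) = 0) := by
  constructor
  · intro h
    refine ⟨fun i => if x i = 0 then 0 else x i - ℓ i, ?_, ?_, ?_⟩
    · intro i
      by_cases hx : x i = 0
      · simp [hx]
      · rcases h i with h0 | ⟨h1, _⟩
        · exact absurd h0 hx
        · simp [hx, sub_nonneg.mpr h1]
    · intro i
      rcases h i with h0 | ⟨_, h2⟩
      · rw [h0]; exact hu i
      · exact h2
    · intro i
      by_cases hx : x i = 0 <;> simp [hx]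
  · rintro ⟨y, hy, hxu, hprod⟩ i
    rcases mul_eq_zero.mp (hprod i) with h0 | h1
    · exact Or.inl h0
    · refine Or.inr ⟨?_, hxu i⟩
      have : x i = ℓ i + y i := by linarith [sub_eq_zero.mp h1]
      linarith [hy i]
end

section
/- Let x̄ be feasible for the MPSC with continuously differentiable data. If MPSC-MFCQ holds at x̄ (the gradients of active inequality constraints together with the gradients of equality constraints and of G_l for l with G_l(x̄)=0 and of H_l for l with H_l(x̄)=0 are positive-linearly independent), then MPSC-NNAMCQ holds at x̄. -/
open Finset

abbrev E (n : ℕ) := EuclideanSpace ℝ (Fin n)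

/-- MPSC-MFCQ implies MPSC-NNAMCQ at a feasible point of the MPSC. -/
theorem mpsc_mfcq_implies_nnamcq {n m p q : ℕ}
    (g : Fin m → E n → ℝ) (h : Fin p → E n → ℝ) (G H : Fin q → E n → ℝ) (x : E n)
    (hfg : ∀ i, g i x ≤ 0) (hfh : ∀ j, h j x = 0) (hfGH : ∀ l, G l x * H l x = 0)
    -- MPSC-MFCQ: positive-linear independence of the gradients of active inequality
    -- constraints, equality constraints, and G_l (resp. H_l) for l with G_l(x)=0
    -- (resp. H_l(x)=0)
    (MFCQ : ∀ (lam : Fin m → ℝ) (rho : Fin p → ℝ) (mu nu : Fin q → ℝ),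
      (∀ i, 0 ≤ lam i) → (∀ i, g i x ≠ 0 → lam i = 0) →
      (∀ l, G l x ≠ 0 → mu l = 0) → (∀ l, H l x ≠ 0 → nu l = 0) →
      (∑ i, lam i • fderiv ℝ (g i) x) + (∑ j, rho j • fderiv ℝ (h j) x)
        + (∑ l, (mu l • fderiv ℝ (G l) x + nu l • fderiv ℝ (H l) x)) = 0 →
      lam = 0 ∧ rho = 0 ∧ mu = 0 ∧ nu = 0) :
    -- MPSC-NNAMCQ
    ∀ (lam : Fin m → ℝ) (rho : Fin p → ℝ) (mu nu : Fin q → ℝ),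
      (∀ i, 0 ≤ lam i) → (∀ i, g i x ≠ 0 → lam i = 0) →
      (∀ l, H l x = 0 ∧ G l x ≠ 0 → mu l = 0) →
      (∀ l, G l x = 0 ∧ H l x ≠ 0 → nu l = 0) →
      (∀ l, G l x = 0 ∧ H l x = 0 → mu l * nu l = 0) →
      (∑ i, lam i • fderiv ℝ (g i) x) + (∑ j, rho j • fderiv ℝ (h j) x)
        + (∑ l, (mu l • fderiv ℝ (G l) x + nu l • fderiv ℝ (H l) x)) = 0 →
      lam = 0 ∧ rho = 0 ∧ mu = 0 ∧ nu = 0 := by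
  intro lam rho mu nu hlam hlamg hmu hnu _ heq
  exact MFCQ lam rho mu nu hlam hlamg
    (fun l hG => hmu l ⟨by rcases mul_eq_zero.1 (hfGH l) with h' | h' <;> [exact absurd h' hG; exact h'], hG⟩)
    (fun l hH => hnu l ⟨by rcases mul_eq_zero.1 (hfGH l) with h' | h' <;> [exact h'; exact absurd h' hH], hH⟩)
    heq
end
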